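/- arXiv:0908.3448 — 8 statements merged into one kernel-verified Lean document; each statement's English description precedes it below -/
import Mathlib

section
/- For 2 ≤ p ≤ m−2, s(m,p) ≤ p−1: there is no p × m matrix over Z/2 such that every p of its columns span (Z/2)^p. -/
open Matrix Finset

/-- Every `p` columns of `A` span `(ZMod 2)^k`. -/
def SpanProp (k m p : ℕ) (A : Matrix (Fin k) (Fin m) (ZMod 2)) : Prop :=
  ∀ S : Finset (Fin m), S.card = p →
    Submodule.span (ZMod 2) (Aᵀ '' (S : Set (Fin m))) = ⊤

/-- The Buchstaber-type invariant: the maximum `k` such that some `k × m`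
matrix over `ZMod 2` has every `p` columns spanning. -/
noncomputable def s (m p : ℕ) : ℕ :=
  sSup {k : ℕ | ∃ A : Matrix (Fin k) (Fin m) (ZMod 2), SpanProp k m p A}

/-- `mk k b`: maximum of `∑ a_v` over nonneg integer tuples indexed by nonzero
vectors of `(ZMod 2)^k` satisfying `∑_{(u,v)=0} a_v ≤ b` for each nonzero `u`. -/
noncomputable def mkInv (k b : ℕ) : ℕ :=
  sSup {m : ℕ | ∃ a : (Fin k → ZMod 2) → ℕ,
    (∀ u : Fin k → ZMod 2, u ≠ 0 →
      ∑ v ∈ Finset.univ.filter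
        (fun v : Fin k → ZMod 2 => v ≠ 0 ∧ dotProduct u v = 0), a v ≤ b) ∧
    ∑ v ∈ Finset.univ.filter (fun v : Fin k → ZMod 2 => v ≠ 0), a v = m}

/-
Suppose every `p` of the `m` columns of a `p × m` matrix over `𝔽₂` span `𝔽₂^p`.
Then every `p` columns form a basis; in particular the columns are pairwise distinct.
Fix a basis `S` of `p` columns and a column `a` outside it. If `a` had a zero coordinate in the
basis `S`, say at `i`, then `a` would lie in the span of `S \ {i}` and the `p` columns
`(S \ {i}) ∪ {a}` would be dependent. So every coordinate is `1`, i.e. `a` is the sum of the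
columns of `S`. Since `m ≥ p + 2` there are two such columns `a ≠ b` outside `S`, and both equal
that sum, a contradiction.
-/

section LinearAlgebra

open Module Submodule

variable {ι K V : Type*} [AddCommGroup V]

theorem finrank_le_card_of_span_image_eq_top [Ring K] [StrongRankCondition K] [Module K V]
    {v : ι → V} {S : Finset ι} (h : span K (v '' S) = ⊤) : finrank K V ≤ S.card := by
  rw [Set.image_eq_range] at h
  simpa using finrank_le_of_span_eq_top h

theorem linearIndepOn_of_span_image_eq_top_of_card_eq_finrank [DivisionRing K] [Module K V]
    {v : ι → V} {S : Finset ι} (h : span K (v '' S) = ⊤) (hS : S.card = finrank K V) :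
    LinearIndepOn K v (S : Set ι) := by
  rw [Set.image_eq_range] at h
  exact linearIndependent_of_top_le_span_of_card_eq_finrank h.ge (by simpa using hS)

theorem injective_of_forall_card_eq_linearIndepOn [Ring K] [Nontrivial K] [Module K V]
    [Fintype ι] {v : ι → V} {p : ℕ} (hp : 2 ≤ p) (hpι : p ≤ Fintype.card ι)
    (h : ∀ S : Finset ι, S.card = p → LinearIndepOn K v (S : Set ι)) :
    Function.Injective v := by
  classical
  intro i j hij
  by_contra hne
  obtain ⟨T, hij_mem, hT⟩ := exists_superset_card_eq (s := {i, j}) (n := p)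
    (by rwa [card_pair hne]) (by simpa using hpι)
  exact hne ((h T hT).injOn (hij_mem (by simp)) (hij_mem (by simp)) hij)

theorem coeff_ne_zero_of_linearIndepOn_insert_erase [DivisionRing K] [Module K V]
    [DecidableEq ι] {v : ι → V} {S : Finset ι} {a i : ι} (ha : a ∉ S) (hi : i ∈ S)
    (hind : LinearIndepOn K v (insert a (S.erase i) : Finset ι)) {c : ι → K}
    (hc : ∑ j ∈ S, c j • v j = v a) : c i ≠ 0 := by
  intro hci
  have ha_mem : v a ∈ span K (v '' (S.erase i : Finset ι)) := by
    rw [← hc, ← add_sum_erase S _ hi, hci, zero_smul, zero_add]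
    exact (mem_span_image_finset_iff_exists_fun' K).2 ⟨c, rfl⟩
  rw [coe_insert, linearIndepOn_insert (fun h ↦ ha (mem_of_mem_erase h))] at hind
  exact hind.2 ha_mem

theorem eq_sum_of_forall_linearIndepOn_insert_erase [Module (ZMod 2) V] [DecidableEq ι]
    {v : ι → V} {S : Finset ι} {a : ι} (ha : a ∉ S) (hspan : v a ∈ span (ZMod 2) (v '' S))
    (hind : ∀ i ∈ S, LinearIndepOn (ZMod 2) v (insert a (S.erase i) : Finset ι)) :
    v a = ∑ i ∈ S, v i := by
  obtain ⟨c, hc⟩ := (mem_span_image_finset_iff_exists_fun' (ZMod 2)).1 hspan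
  rw [← hc]
  refine sum_congr rfl fun i hi ↦ ?_
  have hci : c i = 1 :=
    Fin.eq_one_of_ne_zero _ (coeff_ne_zero_of_linearIndepOn_insert_erase ha hi (hind i hi) hc)
  rw [hci, one_smul]

end LinearAlgebra

namespace SpanProp

variable {k m p : ℕ} {A : Matrix (Fin k) (Fin m) (ZMod 2)}

theorem le (h : SpanProp k m p A) (hpm : p ≤ m) : k ≤ p := by
  obtain ⟨S, -, hS⟩ := exists_subset_card_eq (show p ≤ (univ : Finset (Fin m)).card by simpa)
  simpa [hS] using finrank_le_card_of_span_image_eq_top (h S hS)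

theorem linearIndepOn (h : SpanProp k m k A) {S : Finset (Fin m)} (hS : S.card = k) :
    LinearIndepOn (ZMod 2) Aᵀ (S : Set (Fin m)) :=
  linearIndepOn_of_span_image_eq_top_of_card_eq_finrank (h S hS) (by simpa using hS)

end SpanProp

theorem not_exists_spanProp_self {m p : ℕ} (hp : 2 ≤ p) (hpm : p + 2 ≤ m) :
    ¬ ∃ A : Matrix (Fin p) (Fin m) (ZMod 2), SpanProp p m p A := by
  rintro ⟨A, hA⟩
  have hinj : Function.Injective Aᵀ :=
    injective_of_forall_card_eq_linearIndepOn hp (by simp; omega) fun _ ↦ hA.linearIndepOn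
  obtain ⟨S, -, hS⟩ := exists_subset_card_eq (show p ≤ (univ : Finset (Fin m)).card by simp; omega)
  have hsum : ∀ a ∉ S, Aᵀ a = ∑ i ∈ S, Aᵀ i := fun a ha ↦
    eq_sum_of_forall_linearIndepOn_insert_erase ha (by rw [hA S hS]; trivial) fun i hi ↦
      hA.linearIndepOn (by rw [card_insert_of_notMem (fun h ↦ ha (mem_of_mem_erase h)),
        card_erase_of_mem hi, hS]; omega)
  obtain ⟨a, ha, b, hb, hab⟩ := one_lt_card.1 (show 1 < Sᶜ.card by simp [card_compl, hS]; omega)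
  exact hab (hinj ((hsum a (mem_compl.1 ha)).trans (hsum b (mem_compl.1 hb)).symm))

theorem s_le_p_sub_one (m p : ℕ) (hp : 2 ≤ p) (hpm : p + 2 ≤ m) :
    s m p ≤ p - 1 ∧ ¬ ∃ A : Matrix (Fin p) (Fin m) (ZMod 2), SpanProp p m p A := by
  refine ⟨csSup_le ⟨0, 0, fun _ _ ↦ Subsingleton.elim _ _⟩ ?_, not_exists_spanProp_self hp hpm⟩
  rintro k ⟨A, hA⟩
  have hk_ne : k ≠ p := by
    rintro rfl
    exact not_exists_spanProp_self hp hpm ⟨A, hA⟩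
  have := hA.le (by omega)
  omega
end

section
/- Suppose A = (a_1, …, a_m) is a k × m matrix over Z/2 (with m ≥ p ≥ 1) such that any p of its columns span (Z/2)^k. Let b = a_1 + ⋯ + a_m and let B be the k × (m+1) matrix with columns a_1, …, a_m, b. If m − p is even, then any p columns of B span (Z/2)^k. -/
open Matrix Finset

/-!
If `p` columns of `B` did not span, some `u ≠ 0` would be orthogonal to all of them. As any `p`
columns of `A` span, `u` is orthogonal to some `c < p` of the `a_j`, so the only danger is
`c = p - 1` with `u` orthogonal to `b` as well. But `u ⬝ b = ∑ u ⬝ a_j` counts, modulo 2, the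
`m - c = m - p + 1` columns `a_j` not orthogonal to `u`, an odd number.
-/

theorem span_eq_top_iff_forall_dotProduct_eq_zero {K n : Type*} [Field K] [Fintype n]
    (s : Set (n → K)) :
    Submodule.span K s = ⊤ ↔ ∀ u : n → K, (∀ x ∈ s, u ⬝ᵥ x = 0) → u = 0 := by
  classical
  rw [← Submodule.dualAnnihilator_eq_bot_iff, Submodule.eq_bot_iff]
  refine ((dotProductEquiv K n).toEquiv.forall_congr fun {u} => ?_).symm
  have span_le_ker : (∀ w ∈ Submodule.span K s, u ⬝ᵥ w = 0) ↔ ∀ x ∈ s, u ⬝ᵥ x = 0 :=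
    Submodule.span_le (p := LinearMap.ker (dotProductEquiv K n u))
  simp [span_le_ker, Submodule.mem_dualAnnihilator]

theorem forall_card_eq_span_image_transpose_eq_top_iff {K n ι : Type*} [Field K] [DecidableEq K]
    [Fintype n] [Fintype ι] (A : Matrix n ι K) (p : ℕ) :
    (∀ S : Finset ι, #S = p → Submodule.span K (Aᵀ '' S) = ⊤) ↔
      ∀ u ≠ 0, #{j | (u ᵥ* A) j = 0} < p := by
  simp only [span_eq_top_iff_forall_dotProduct_eq_zero]
  constructor
  · intro h u hu
    by_contra! hle
    obtain ⟨S, hS, hcard⟩ := exists_subset_card_eq hle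
    refine hu (h S hcard u ?_)
    rintro _ ⟨j, hj, rfl⟩
    exact (mem_filter.1 (hS hj)).2
  · intro h S hS u hu
    by_contra hu0
    refine (h u hu0).not_ge (hS ▸ card_le_card fun j hj => ?_)
    exact mem_filter.2 ⟨mem_univ j, hu _ ⟨j, hj, rfl⟩⟩

theorem ZMod.sum_eq_card_filter_ne_zero {ι : Type*} (s : Finset ι) (f : ι → ZMod 2) :
    ∑ i ∈ s, f i = #{i ∈ s | f i ≠ 0} := by
  rw [← sum_filter_ne_zero, card_eq_sum_ones, Nat.cast_sum, Nat.cast_one]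
  refine sum_congr rfl fun i hi => ?_
  have : f i ≠ 0 := (mem_filter.1 hi).2
  revert this
  generalize f i = x
  decide +revert

theorem Fin.card_filter_univ_castSucc {n : ℕ} (P : Fin (n + 1) → Prop) [DecidablePred P] :
    #{j | P j} = #{j : Fin n | P j.castSucc} + if P (Fin.last n) then 1 else 0 := by
  simp only [card_filter, Fin.sum_univ_castSucc]

def appendSumColumn {R : Type*} [AddCommMonoid R] {k m : ℕ} (A : Matrix (Fin k) (Fin m) R) :
    Matrix (Fin k) (Fin (m + 1)) R :=
  Matrix.of fun i (j : Fin (m + 1)) => if h : (j : ℕ) < m then A i ⟨j, h⟩ else ∑ l, A i l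

section appendSumColumn

variable {R : Type*} [NonUnitalNonAssocSemiring R] {k m : ℕ} (A : Matrix (Fin k) (Fin m) R)
  (u : Fin k → R)

@[simp]
theorem vecMul_appendSumColumn_castSucc (j : Fin m) :
    (u ᵥ* appendSumColumn A) j.castSucc = (u ᵥ* A) j := by
  simp [vecMul, dotProduct, appendSumColumn]

@[simp]
theorem vecMul_appendSumColumn_last :
    (u ᵥ* appendSumColumn A) (Fin.last m) = ∑ l, (u ᵥ* A) l := by
  simp only [vecMul, dotProduct, appendSumColumn, of_apply, Fin.val_last, lt_irrefl, dite_false,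
    mul_sum]
  exact sum_comm

end appendSumColumn

theorem spanProp_extend_general (k m p : ℕ)
    (A : Matrix (Fin k) (Fin m) (ZMod 2)) (hA : SpanProp k m p A)
    (hpar : m % 2 = p % 2) :
    SpanProp k (m + 1) p
      (Matrix.of fun i (j : Fin (m + 1)) =>
        if h : (j : ℕ) < m then A i ⟨j, h⟩ else ∑ l, A i l) := by
  change SpanProp k (m + 1) p (appendSumColumn A)
  refine (forall_card_eq_span_image_transpose_eq_top_iff (appendSumColumn A) p).2 fun u hu => ?_
  have hc := (forall_card_eq_span_image_transpose_eq_top_iff A p).1 hA u hu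
  have hcm : #{j | (u ᵥ* A) j = 0} ≤ m := card_le_univ _ |>.trans_eq (Fintype.card_fin m)
  have hsum : ∑ l, (u ᵥ* A) l = ((m - #{j | (u ᵥ* A) j = 0} : ℕ) : ZMod 2) := by
    have := card_filter_add_card_filter_not (s := univ) fun l => (u ᵥ* A) l = 0
    rw [ZMod.sum_eq_card_filter_ne_zero]
    congr 1
    simp only [card_univ, Fintype.card_fin, ne_eq] at this ⊢
    omega
  rw [Fin.card_filter_univ_castSucc]
  simp only [vecMul_appendSumColumn_castSucc, vecMul_appendSumColumn_last, hsum,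
    ZMod.natCast_eq_zero_iff]
  split_ifs <;> omega

theorem spanProp_extend (k m p : ℕ) (hp : 1 ≤ p) (hpm : p ≤ m)
    (A : Matrix (Fin k) (Fin m) (ZMod 2)) (hA : SpanProp k m p A)
    (hpar : m % 2 = p % 2) :
    SpanProp k (m + 1) p
      (Matrix.of fun i (j : Fin (m + 1)) =>
        if h : (j : ℕ) < m then A i ⟨j, h⟩ else ∑ l, A i l) :=
  spanProp_extend_general k m p A hA hpar
end

section
/- For m ≥ 3, s(m, m−2) = ⌊m − log₂(m+1)⌋; equivalently, the maximal k for which there exists a k × m matrix over Z/2 in which any m−2 columns span (Z/2)^k is the greatest integer k satisfying k ≤ 2^{m−k} − 1 − m + k, i.e. 2^{m−k} ≥ m + 1. -/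
open Matrix Finset

/-!
Every `m - 2` columns of `A` span `(ZMod 2)^k` iff no nonzero `u` is orthogonal to all but two
columns, i.e. iff every nonzero codeword `u ᵥ* A` of the row space has Hamming weight at least 3.
The radius-1 Hamming balls around the `2^k` codewords are then disjoint, so `2^k (m + 1) ≤ 2^m`.
Conversely, if `m + 1 ≤ 2^r` with `r = m - k`, pick `k` distinct vectors `E i` of weight at
least 2 in `(ZMod 2)^r`; the code generated by `[I | E]` (a shortened Hamming code) has
minimum weight 3. The largest such `k` is `m - ⌈log₂ (m + 1)⌉ = ⌊m - log₂ (m + 1)⌋`.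
-/

theorem span_eq_top_iff_forall_dotProduct_ne_zero {K n : Type*} [Field K] [Fintype n]
    [DecidableEq n] (V : Set (n → K)) :
    Submodule.span K V = ⊤ ↔ ∀ u : n → K, u ≠ 0 → ∃ x ∈ V, u ⬝ᵥ x ≠ 0 := by
  rw [← Submodule.dualAnnihilator_eq_bot_iff, Submodule.eq_bot_iff,
    ← (dotProductEquiv K n).toEquiv.forall_congr_right]
  refine forall_congr' fun u => ?_
  rw [not_imp_comm, ← SetLike.mem_coe, Submodule.coe_dualAnnihilator_span]
  simp [Set.subset_def]

theorem forall_card_eq_exists_ne_zero_iff_lt_hammingNorm {ι M : Type*} [Fintype ι]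
    [DecidableEq ι] [Zero M] [DecidableEq M] (v : ι → M) {p : ℕ}
    (hp : p ≤ Fintype.card ι) :
    (∀ S : Finset ι, #S = p → ∃ j ∈ S, v j ≠ 0) ↔
      Fintype.card ι - p < hammingNorm v := by
  constructor
  · intro h
    by_contra! hle
    obtain ⟨T, hsupp, hT⟩ := exists_superset_card_eq (s := {j | v j ≠ 0}) hle (by simp)
    obtain ⟨j, hjS, hj⟩ := h Tᶜ (by rw [card_compl, hT]; omega)
    exact mem_compl.mp hjS (hsupp (mem_filter.mpr ⟨mem_univ j, hj⟩))
  · intro h S hS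
    by_contra! hzero
    have hsupp : ({j | v j ≠ 0} : Finset ι) ⊆ Sᶜ := fun j hj =>
      mem_compl.mpr fun hjS => (mem_filter.mp hj).2 (hzero j hjS)
    have := card_le_card hsupp
    rw [card_compl, hS] at this
    exact absurd h (not_lt.mpr this)

theorem forall_span_columns_eq_top_iff_lt_hammingNorm {K κ ι : Type*} [Field K] [DecidableEq K]
    [Fintype κ] [DecidableEq κ] [Fintype ι] [DecidableEq ι] (A : Matrix κ ι K) {p : ℕ}
    (hp : p ≤ Fintype.card ι) :
    (∀ S : Finset ι, #S = p → Submodule.span K (Aᵀ '' (S : Set ι)) = ⊤) ↔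
      ∀ u : κ → K, u ≠ 0 → Fintype.card ι - p < hammingNorm (u ᵥ* A) := by
  have image_iff (u : κ → K) (S : Finset ι) :
      (∃ x ∈ Aᵀ '' (S : Set ι), u ⬝ᵥ x ≠ 0) ↔ ∃ j ∈ S, (u ᵥ* A) j ≠ 0 :=
    ⟨by rintro ⟨_, ⟨j, hj, rfl⟩, h⟩; exact ⟨j, hj, h⟩,
      fun ⟨j, hj, h⟩ => ⟨_, ⟨j, hj, rfl⟩, h⟩⟩
  simp_rw [span_eq_top_iff_forall_dotProduct_ne_zero, image_iff,
    ← forall_card_eq_exists_ne_zero_iff_lt_hammingNorm _ hp]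
  exact ⟨fun h u hu S hS => h S hS u hu, fun h S hS u hu => h u hu S hS⟩

theorem hammingNorm_sumElim {ι₁ ι₂ M : Type*} [Fintype ι₁] [Fintype ι₂] [Zero M]
    [DecidableEq M] (x : ι₁ → M) (y : ι₂ → M) :
    hammingNorm (Sum.elim x y) = hammingNorm x + hammingNorm y := by
  simp only [hammingNorm, ← card_disjSum]
  congr 1
  ext (j | j) <;> simp

theorem hammingNorm_comp_equiv {ι₁ ι₂ M : Type*} [Fintype ι₁] [Fintype ι₂] [Zero M]
    [DecidableEq M] (x : ι₂ → M) (e : ι₁ ≃ ι₂) :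
    hammingNorm (x ∘ e) = hammingNorm x :=
  card_equiv e (by simp)

theorem ZMod.eq_one_of_ne_zero {x : ZMod 2} (hx : x ≠ 0) : x = 1 := by
  revert x; decide

theorem ZMod.vecMul_of_eq_sum_support {ι κ : Type*} [Fintype ι] (u : ι → ZMod 2)
    (E : ι → κ → ZMod 2) : u ᵥ* of E = ∑ i ∈ {i | u i ≠ 0}, E i := by
  refine (vecMul_eq_sum u (of E)).trans ((sum_congr rfl fun i _ => ?_).trans (sum_filter _ _).symm)
  split_ifs with h
  · rw [ZMod.eq_one_of_ne_zero h, one_smul]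
    rfl
  · rw [not_not.mp h, zero_smul]

theorem ZMod.filter_hammingNorm_le_one_eq {ι : Type*} [Fintype ι] [DecidableEq ι] :
    ({v | hammingNorm v ≤ 1} : Finset (ι → ZMod 2)) =
      insert 0 (univ.image fun i => Pi.single i 1) := by
  ext v
  simp only [mem_filter, mem_univ, true_and, mem_insert, mem_image]
  constructor
  · intro hv
    rcases Nat.le_one_iff_eq_zero_or_eq_one.mp hv with h0 | h1
    · exact Or.inl (hammingNorm_eq_zero.mp h0)
    · obtain ⟨i, hi⟩ := card_eq_one.mp h1
      refine Or.inr ⟨i, ?_⟩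
      have hsupp (j : ι) : v j ≠ 0 ↔ j = i := by simpa using congr_arg (j ∈ ·) hi
      ext j
      rw [Pi.single_apply]
      split_ifs with hj
      · exact (ZMod.eq_one_of_ne_zero ((hsupp j).mpr hj)).symm
      · exact (not_not.mp (mt (hsupp j).mp hj)).symm
  · rintro (rfl | ⟨i, rfl⟩)
    · simp
    · refine card_le_one.mpr fun a ha b hb => ?_
      simp only [mem_filter, mem_univ, true_and] at ha hb
      rw [Pi.single_apply] at ha hb
      simp_all

theorem ZMod.card_filter_hammingNorm_le_one {ι : Type*} [Fintype ι] [DecidableEq ι] :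
    #({v | hammingNorm v ≤ 1} : Finset (ι → ZMod 2)) = Fintype.card ι + 1 := by
  have single_injective : Function.Injective fun i : ι => (Pi.single i 1 : ι → ZMod 2) :=
    fun i j h => by simpa [Pi.single_apply] using congr_fun h i
  rw [ZMod.filter_hammingNorm_le_one_eq, card_insert_of_notMem,
    card_image_of_injective _ single_injective, card_univ]
  simp

theorem ZMod.two_pow_mul_card_add_one_le {κ ι : Type*} [Fintype κ] [DecidableEq κ] [Fintype ι]
    [DecidableEq ι] (A : Matrix κ ι (ZMod 2))
    (hA : ∀ u : κ → ZMod 2, u ≠ 0 → 3 ≤ hammingNorm (u ᵥ* A)) :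
    2 ^ Fintype.card κ * (Fintype.card ι + 1) ≤ 2 ^ Fintype.card ι := by
  have hinj : Function.Injective
      fun p : (κ → ZMod 2) × {w : ι → ZMod 2 // hammingNorm w ≤ 1} =>
        p.1 ᵥ* A + p.2.1 := by
    rintro ⟨u, w, hw⟩ ⟨u', w', hw'⟩ h
    have hdiff : (u - u') ᵥ* A = w' - w := by
      rw [sub_vecMul, sub_eq_sub_iff_add_eq_add, add_comm w']; exact h
    have hu : u = u' := by
      by_contra hne
      have h3 := hA _ (sub_ne_zero.mpr hne)
      have h2 := hammingDist_triangle w 0 w'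
      rw [hdiff, ← neg_add_eq_sub, ← hammingDist_eq_hammingNorm] at h3
      rw [hammingDist_zero_right, hammingDist_zero_left] at h2
      omega
    subst hu
    simpa using h
  simpa [Fintype.card_subtype, ZMod.card_filter_hammingNorm_le_one] using
    Fintype.card_le_of_injective _ hinj

theorem ZMod.three_le_hammingNorm_vecMul_fromCols_one {ι κ : Type*} [Fintype ι]
    [DecidableEq ι] [Fintype κ] (E : ι → κ → ZMod 2) (hE : Function.Injective E)
    (hE₂ : ∀ i, 2 ≤ hammingNorm (E i)) {u : ι → ZMod 2} (hu : u ≠ 0) :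
    3 ≤ hammingNorm (u ᵥ* fromCols (1 : Matrix ι ι (ZMod 2)) (of E)) := by
  rw [vecMul_fromCols, hammingNorm_sumElim, vecMul_one, ZMod.vecMul_of_eq_sum_support]
  have hpos := hammingNorm_pos_iff.mpr hu
  obtain h1 | h2 | h3 : hammingNorm u = 1 ∨ hammingNorm u = 2 ∨ 3 ≤ hammingNorm u := by omega
  · obtain ⟨i, hi⟩ := card_eq_one.mp h1
    simp only [hi, sum_singleton]
    have := hE₂ i
    omega
  · obtain ⟨i, j, hij, hsupp⟩ := card_eq_two.mp h2
    simp only [hsupp, sum_pair hij]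
    have : 0 < hammingNorm (E i + E j) :=
      hammingNorm_pos_iff.mpr fun h =>
        hij (hE (funext fun t => CharTwo.add_eq_zero.mp (congr_fun h t)))
    omega
  · omega

theorem ZMod.exists_injective_two_le_hammingNorm {κ ι : Type*} [Fintype κ] [Fintype ι]
    [DecidableEq ι] (h : Fintype.card κ + Fintype.card ι + 1 ≤ 2 ^ Fintype.card ι) :
    ∃ E : κ → ι → ZMod 2, Function.Injective E ∧ ∀ i, 2 ≤ hammingNorm (E i) := by
  have hcard : Fintype.card κ ≤ Fintype.card {v : ι → ZMod 2 // 2 ≤ hammingNorm v} := by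
    have hsplit :=
      card_filter_add_card_filter_not (s := univ) fun v : ι → ZMod 2 => hammingNorm v ≤ 1
    rw [ZMod.card_filter_hammingNorm_le_one, card_univ, Fintype.card_fun, ZMod.card] at hsplit
    simp only [not_le] at hsplit
    rw [Fintype.card_subtype]
    change _ ≤ #{v | 1 < hammingNorm v}
    omega
  obtain ⟨E⟩ := Function.Embedding.nonempty_of_card_le hcard
  exact ⟨fun i => E i, fun i j h => E.injective (Subtype.ext h), fun i => (E i).2⟩

theorem Nat.clog_two_succ_le_self (m : ℕ) : Nat.clog 2 (m + 1) ≤ m :=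
  (Nat.clog_le_iff_le_pow one_lt_two).mpr Nat.lt_two_pow_self

theorem isGreatest_setOf_succ_le_two_pow_sub (m : ℕ) :
    IsGreatest {k : ℕ | m + 1 ≤ 2 ^ (m - k) ∧ k ≤ m} (m - Nat.clog 2 (m + 1)) := by
  refine ⟨⟨?_, Nat.sub_le _ _⟩, fun k ⟨hk, _⟩ => ?_⟩
  · rw [Nat.sub_sub_self (Nat.clog_two_succ_le_self m)]
    exact Nat.le_pow_clog one_lt_two _
  · have := (Nat.clog_le_iff_le_pow one_lt_two).mpr hk
    omega

theorem floor_natCast_sub_logb_two_succ (m : ℕ) :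
    ⌊(m : ℝ) - Real.logb 2 (m + 1)⌋ = ((m - Nat.clog 2 (m + 1) : ℕ) : ℤ) := by
  have hceil : ⌈Real.logb 2 (m + 1)⌉ = Nat.clog 2 (m + 1) := by
    have := Real.ceil_logb_natCast (b := 2) (r := ((m + 1 : ℕ) : ℝ)) (by positivity)
    rw [Int.clog_natCast] at this
    exact_mod_cast this
  rw [sub_eq_add_neg, Int.floor_natCast_add, Int.floor_neg, hceil,
    Nat.cast_sub (Nat.clog_two_succ_le_self m)]
  ring

theorem spanProp_sub_two_iff {k m : ℕ} (hm : 2 ≤ m) (A : Matrix (Fin k) (Fin m) (ZMod 2)) :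
    SpanProp k m (m - 2) A ↔
      ∀ u : Fin k → ZMod 2, u ≠ 0 → 3 ≤ hammingNorm (u ᵥ* A) := by
  have h := forall_span_columns_eq_top_iff_lt_hammingNorm A (p := m - 2) (by simp)
  rwa [Fintype.card_fin, Nat.sub_sub_self hm] at h

theorem succ_le_two_pow_sub_of_spanProp {k m : ℕ} (hm : 2 ≤ m)
    {A : Matrix (Fin k) (Fin m) (ZMod 2)} (hA : SpanProp k m (m - 2) A) :
    m + 1 ≤ 2 ^ (m - k) ∧ k ≤ m := by
  have h := ZMod.two_pow_mul_card_add_one_le A ((spanProp_sub_two_iff hm A).mp hA)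
  simp only [Fintype.card_fin] at h
  have hk : k ≤ m :=
    (Nat.pow_le_pow_iff_right one_lt_two).mp ((Nat.le_mul_of_pos_right _ m.succ_pos).trans h)
  have hsplit : 2 ^ m = 2 ^ k * 2 ^ (m - k) := by rw [← pow_add, Nat.add_sub_cancel' hk]
  rw [hsplit] at h
  exact ⟨Nat.le_of_mul_le_mul_left h (Nat.two_pow_pos k), hk⟩

theorem exists_spanProp_sub_two {k m : ℕ} (hm : 2 ≤ m) (hk : k ≤ m)
    (h : m + 1 ≤ 2 ^ (m - k)) :
    ∃ A : Matrix (Fin k) (Fin m) (ZMod 2), SpanProp k m (m - 2) A := by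
  obtain ⟨E, hE, hE₂⟩ :=
    ZMod.exists_injective_two_le_hammingNorm (κ := Fin k) (ι := Fin (m - k))
      (by simp only [Fintype.card_fin]; omega)
  let σ : Fin k ⊕ Fin (m - k) ≃ Fin m := finSumFinEquiv.trans (finCongr (by omega))
  refine ⟨(fromCols 1 (of E)).submatrix (Equiv.refl _) σ.symm,
    (spanProp_sub_two_iff hm _).mpr fun u hu => ?_⟩
  rw [submatrix_vecMul_equiv, hammingNorm_comp_equiv, Equiv.refl_symm, Equiv.coe_refl,
    Function.comp_id]
  exact ZMod.three_le_hammingNorm_vecMul_fromCols_one E hE hE₂ hu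

theorem s_m_sub_two (m : ℕ) (hm : 3 ≤ m) :
    (s m (m - 2) : ℤ) = ⌊(m : ℝ) - Real.logb 2 (m + 1)⌋ ∧
    IsGreatest {k : ℕ | m + 1 ≤ 2 ^ (m - k) ∧ k ≤ m} (s m (m - 2)) := by
  have hachievable : {k | ∃ A : Matrix (Fin k) (Fin m) (ZMod 2), SpanProp k m (m - 2) A} =
      {k | m + 1 ≤ 2 ^ (m - k) ∧ k ≤ m} :=
    Set.ext fun k => ⟨fun ⟨_, hA⟩ => succ_le_two_pow_sub_of_spanProp (by omega) hA,
      fun ⟨h, hk⟩ => exists_spanProp_sub_two (by omega) hk h⟩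
  have hgreatest := isGreatest_setOf_succ_le_two_pow_sub m
  have hs : s m (m - 2) = m - Nat.clog 2 (m + 1) := by
    rw [s, hachievable]
    exact hgreatest.csSup_eq
  rw [hs, floor_natCast_sub_logb_two_succ]
  exact ⟨rfl, hgreatest⟩
end

section
/- Let k ≥ 2 and b a real number. If real numbers a_v ≥ 0 indexed by the nonzero v in (Z/2)^k satisfy Σ_{(u,v)=0} a_v ≤ b for every nonzero u in (Z/2)^k, then Σ_v a_v ≤ (2^k − 1)b/(2^{k−1} − 1), with equality if and only if a_v = b/(2^{k−1} − 1) for all v. -/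
/-!
Summing the constraint over all nonzero `u` counts every `a v` exactly `2 ^ (k - 1) - 1` times,
since `v^⊥` has that many nonzero points; this gives the bound. At equality every constraint is
tight, and summing the tight constraints over the `2 ^ (k - 1)` vectors `u` with `(u, v₀) = 1`
counts every `a v` with `v ≠ v₀` exactly `2 ^ (k - 2)` times and `a v₀` never, so
`∑ a - a v₀ = 2 b`, which determines `a v₀`. Both counts hold because
`u ↦ ((u, w₁), …, (u, wₙ))` maps onto `Fⁿ` when `w₁, …, wₙ` are linearly independent, so
all its fibres have the same size.
-/

open Matrix Finset

lemma AddMonoidHom.card_fiber_mul_card_of_surjective {G M F : Type*} [AddGroup G] [Fintype G]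
    [AddMonoid M] [Fintype M] [DecidableEq M] [FunLike F G M] [AddMonoidHomClass F G M]
    (f : F) (hf : Function.Surjective f) (y : M) :
    #{g | f g = y} * Fintype.card M = Fintype.card G := calc
  _ = ∑ z : M, #{g | f g = z} := by
    rw [sum_congr rfl fun z _ => AddMonoidHom.card_fiber_eq_of_mem_range f (hf z) (hf y),
      sum_const, card_univ, smul_eq_mul, mul_comm]
  _ = Fintype.card G := (card_eq_sum_card_fiberwise fun _ _ => mem_univ _).symm

lemma Matrix.mulVec_surjective_of_linearIndependent {F m n : Type*} [Field F] [Fintype m]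
    [Fintype n] {A : Matrix m n F} (hA : LinearIndependent F A.row) :
    Function.Surjective A.mulVec := by
  rw [← A.coe_mulVecLin, ← LinearMap.range_eq_top]
  apply Submodule.eq_top_of_finrank_eq
  rw [← Matrix.rank, hA.rank_matrix, Module.finrank_fintype_fun_eq_card]

lemma Matrix.card_filter_mulVec_eq_mul_card_pow {F m n : Type*} [Field F] [Fintype F]
    [DecidableEq F] [Fintype m] [Fintype n] [DecidableEq m] [DecidableEq n] {A : Matrix m n F}
    (hA : LinearIndependent F A.row) (c : m → F) :
    #{u | A *ᵥ u = c} * Fintype.card F ^ Fintype.card m = Fintype.card F ^ Fintype.card n := by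
  have h := AddMonoidHom.card_fiber_mul_card_of_surjective A.mulVecLin
    (mulVec_surjective_of_linearIndependent hA) c
  simp only [Fintype.card_fun, Matrix.mulVecLin_apply] at h
  exact h

variable {k : ℕ}

lemma card_filter_dotProduct_eq {v : Fin k → ZMod 2} (hv : v ≠ 0) (c : ZMod 2) :
    #{u | u ⬝ᵥ v = c} = 2 ^ (k - 1) := by
  have h := card_filter_mulVec_eq_mul_card_pow (A := Matrix.of ![v])
    (linearIndependent_unique_iff.2 hv) ![c]
  have hfilter : ∀ u : Fin k → ZMod 2, Matrix.of ![v] *ᵥ u = ![c] ↔ u ⬝ᵥ v = c := by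
    intro u
    simp [funext_iff, dotProduct_comm]
  simp only [hfilter, ZMod.card, Fintype.card_fin, pow_one] at h
  rcases k with _ | k
  · omega
  · rw [pow_succ] at h
    rw [Nat.add_sub_cancel]
    omega

lemma card_filter_dotProduct_eq_and {v w : Fin k → ZMod 2} (hv : v ≠ 0) (hw : w ≠ 0)
    (hvw : v ≠ w) (c d : ZMod 2) : #{u | u ⬝ᵥ v = c ∧ u ⬝ᵥ w = d} = 2 ^ (k - 2) := by
  have hind : LinearIndependent (ZMod 2) ![v, w] := by
    rw [LinearIndependent.pair_iff' hv]
    intro e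
    rcases (by decide : ∀ e : ZMod 2, e = 0 ∨ e = 1) e with rfl | rfl
    · rwa [zero_smul, ne_comm]
    · rwa [one_smul]
  have h := card_filter_mulVec_eq_mul_card_pow (A := Matrix.of ![v, w]) hind ![c, d]
  have hfilter : ∀ u : Fin k → ZMod 2,
      Matrix.of ![v, w] *ᵥ u = ![c, d] ↔ u ⬝ᵥ v = c ∧ u ⬝ᵥ w = d := by
    intro u
    simp [funext_iff, Fin.forall_fin_two, dotProduct_comm]
  simp only [hfilter, ZMod.card, Fintype.card_fin] at h
  rcases k with _ | _ | k
  · omega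
  · omega
  · rw [pow_succ, pow_succ] at h
    rw [show k + 1 + 1 - 2 = k by omega]
    omega

lemma card_filter_ne_zero : #{v : Fin k → ZMod 2 | v ≠ 0} = 2 ^ k - 1 := by
  rw [filter_ne', card_erase_of_mem (mem_univ _), card_univ, Fintype.card_fun, ZMod.card,
    Fintype.card_fin]

lemma card_filter_ne_zero_dotProduct_eq_zero {v : Fin k → ZMod 2} (hv : v ≠ 0) :
    #{u | u ≠ 0 ∧ u ⬝ᵥ v = 0} = 2 ^ (k - 1) - 1 := by
  have herase : ({u | u ≠ 0 ∧ u ⬝ᵥ v = 0} : Finset (Fin k → ZMod 2)) =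
      ({u | u ⬝ᵥ v = 0} : Finset _).erase 0 := by
    ext u
    simp [and_comm]
  rw [herase, card_erase_of_mem (by simp), card_filter_dotProduct_eq hv]

section hyperplaneSum

variable {R M : Type*} [Semiring R] [Fintype R] [DecidableEq R] [AddCommMonoid M]

def hyperplaneSum (a : (Fin k → R) → M) (u : Fin k → R) : M :=
  ∑ v ∈ univ.filter (fun v => v ≠ 0 ∧ u ⬝ᵥ v = 0), a v

lemma sum_hyperplaneSum (a : (Fin k → R) → M) (U : Finset (Fin k → R)) :
    ∑ u ∈ U, hyperplaneSum a u =
      ∑ v ∈ univ.filter (· ≠ 0), #{u ∈ U | u ⬝ᵥ v = 0} • a v := by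
  calc ∑ u ∈ U, hyperplaneSum a u
      = ∑ u ∈ U, ∑ v ∈ univ.filter (· ≠ 0), if u ⬝ᵥ v = 0 then a v else 0 := by
        simp only [hyperplaneSum, ← filter_filter, sum_filter]
    _ = ∑ v ∈ univ.filter (· ≠ 0), ∑ u ∈ U, if u ⬝ᵥ v = 0 then a v else 0 := sum_comm
    _ = _ := by simp only [← sum_filter, sum_const]

end hyperplaneSum

section Binary

variable (a : (Fin k → ZMod 2) → ℝ)

lemma sum_hyperplaneSum_ne_zero :
    ∑ u ∈ univ.filter (· ≠ 0), hyperplaneSum a u =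
      (2 ^ (k - 1) - 1) * ∑ v ∈ univ.filter (· ≠ 0), a v := by
  rw [sum_hyperplaneSum, mul_sum]
  refine sum_congr rfl fun v hv => ?_
  rw [filter_filter, card_filter_ne_zero_dotProduct_eq_zero (mem_filter.1 hv).2, nsmul_eq_mul,
    Nat.cast_sub Nat.one_le_two_pow]
  push_cast
  rfl

lemma sum_hyperplaneSum_dotProduct_eq_one {v₀ : Fin k → ZMod 2} (hv₀ : v₀ ≠ 0) :
    ∑ u ∈ univ.filter (· ⬝ᵥ v₀ = 1), hyperplaneSum a u =
      2 ^ (k - 2) * (∑ v ∈ univ.filter (· ≠ 0), a v - a v₀) := by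
  have hv₀mem : v₀ ∈ univ.filter (· ≠ 0) := mem_filter.2 ⟨mem_univ _, hv₀⟩
  rw [sum_hyperplaneSum, ← add_sum_erase _ _ hv₀mem, ← add_sum_erase _ _ hv₀mem,
    add_sub_cancel_left, mul_sum, filter_filter]
  have hempty : #{u : Fin k → ZMod 2 | u ⬝ᵥ v₀ = 1 ∧ u ⬝ᵥ v₀ = 0} = 0 := by
    simp +contextual
  rw [hempty, zero_smul, zero_add]
  refine sum_congr rfl fun v hv => ?_
  obtain ⟨hvv₀, hv⟩ := mem_erase.1 hv
  rw [filter_filter, card_filter_dotProduct_eq_and hv₀ (mem_filter.1 hv).2 (Ne.symm hvv₀),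
    nsmul_eq_mul]
  push_cast
  rfl

variable {a} {b : ℝ}

lemma sum_filter_ne_zero_const :
    ∑ _u ∈ univ.filter (· ≠ (0 : Fin k → ZMod 2)), b = (2 ^ k - 1) * b := by
  rw [sum_const, card_filter_ne_zero, nsmul_eq_mul, Nat.cast_sub Nat.one_le_two_pow]
  push_cast
  rfl

lemma mul_sum_le_of_hyperplaneSum_le (hb : ∀ u, u ≠ 0 → hyperplaneSum a u ≤ b) :
    (2 ^ (k - 1) - 1) * ∑ v ∈ univ.filter (· ≠ 0), a v ≤ (2 ^ k - 1) * b := by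
  rw [← sum_hyperplaneSum_ne_zero, ← sum_filter_ne_zero_const]
  exact sum_le_sum fun u hu => hb u (mem_filter.1 hu).2

lemma hyperplaneSum_eq_of_mul_sum_eq (hb : ∀ u, u ≠ 0 → hyperplaneSum a u ≤ b)
    (hS : (2 ^ (k - 1) - 1) * ∑ v ∈ univ.filter (· ≠ 0), a v = (2 ^ k - 1) * b) :
    ∀ u, u ≠ 0 → hyperplaneSum a u = b := by
  rw [← sum_hyperplaneSum_ne_zero, ← sum_filter_ne_zero_const,
    sum_eq_sum_iff_of_le fun u hu => hb u (mem_filter.1 hu).2] at hS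
  exact fun u hu => hS u (mem_filter.2 ⟨mem_univ _, hu⟩)

lemma sum_sub_eq_of_hyperplaneSum_eq (hk : 2 ≤ k) (hb : ∀ u, u ≠ 0 → hyperplaneSum a u = b)
    {v₀ : Fin k → ZMod 2} (hv₀ : v₀ ≠ 0) :
    ∑ v ∈ univ.filter (· ≠ 0), a v - a v₀ = 2 * b := by
  have hsum : ∑ u ∈ univ.filter (· ⬝ᵥ v₀ = 1), hyperplaneSum a u = 2 ^ (k - 1) * b := by
    rw [sum_congr rfl fun u hu => hb u ?_, sum_const, card_filter_dotProduct_eq hv₀,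
      nsmul_eq_mul]
    · push_cast
      rfl
    · rintro rfl
      simp at hu
  have hpow : (2 : ℝ) ^ (k - 1) = 2 ^ (k - 2) * 2 := by
    rw [← pow_succ]
    congr 1
    omega
  rw [sum_hyperplaneSum_dotProduct_eq_one a hv₀, hpow, mul_assoc] at hsum
  exact mul_left_cancel₀ (by positivity) hsum

end Binary

theorem real_lp_bound_general (k : ℕ) (hk : 2 ≤ k) (b : ℝ) (a : (Fin k → ZMod 2) → ℝ)
    (hb : ∀ u : Fin k → ZMod 2, u ≠ 0 →
      ∑ v ∈ Finset.univ.filter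
        (fun v : Fin k → ZMod 2 => v ≠ 0 ∧ dotProduct u v = 0), a v ≤ b) :
    (∑ v ∈ Finset.univ.filter (fun v : Fin k → ZMod 2 => v ≠ 0), a v ≤
      (2 ^ k - 1) * b / (2 ^ (k - 1) - 1)) ∧
    ((∑ v ∈ Finset.univ.filter (fun v : Fin k → ZMod 2 => v ≠ 0), a v =
      (2 ^ k - 1) * b / (2 ^ (k - 1) - 1)) ↔
      ∀ v : Fin k → ZMod 2, v ≠ 0 → a v = b / (2 ^ (k - 1) - 1)) := by
  have hD : (0 : ℝ) < 2 ^ (k - 1) - 1 := by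
    have : (2 : ℝ) ≤ 2 ^ (k - 1) := le_self_pow₀ one_le_two (by omega)
    linarith
  have hN : (2 : ℝ) ^ k - 1 = 2 * (2 ^ (k - 1) - 1) + 1 := by
    rw [← Nat.sub_add_cancel (by omega : 1 ≤ k), pow_succ, Nat.add_sub_cancel]
    ring
  refine ⟨(le_div_iff₀ hD).2 (by linarith [mul_sum_le_of_hyperplaneSum_le hb]),
    fun hS v hv => ?_, fun ha => ?_⟩
  · rw [eq_div_iff hD.ne'] at hS
    have hsub := sum_sub_eq_of_hyperplaneSum_eq hk
      (hyperplaneSum_eq_of_mul_sum_eq hb (by linarith)) hv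
    rw [eq_div_iff hD.ne']
    linear_combination -(2 ^ (k - 1) - 1 : ℝ) * hsub + hS + b * hN
  · rw [sum_congr rfl fun v hv => ha v (mem_filter.1 hv).2, sum_filter_ne_zero_const]
    ring

theorem real_lp_bound (k : ℕ) (hk : 2 ≤ k) (b : ℝ) (a : (Fin k → ZMod 2) → ℝ)
    (ha : ∀ v : Fin k → ZMod 2, v ≠ 0 → 0 ≤ a v)
    (hb : ∀ u : Fin k → ZMod 2, u ≠ 0 →
      ∑ v ∈ Finset.univ.filter
        (fun v : Fin k → ZMod 2 => v ≠ 0 ∧ dotProduct u v = 0), a v ≤ b) :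
    (∑ v ∈ Finset.univ.filter (fun v : Fin k → ZMod 2 => v ≠ 0), a v ≤
      (2 ^ k - 1) * b / (2 ^ (k - 1) - 1)) ∧
    ((∑ v ∈ Finset.univ.filter (fun v : Fin k → ZMod 2 => v ≠ 0), a v =
      (2 ^ k - 1) * b / (2 ^ (k - 1) - 1)) ↔
      ∀ v : Fin k → ZMod 2, v ≠ 0 → a v = b / (2 ^ (k - 1) - 1)) :=
  real_lp_bound_general k hk b a hb
end

section
/- For k ≥ 2 and any non-negative integer Q, m_k((2^{k−1} − 1)Q) = (2^k − 1)Q; in particular m_2(b) = 3b for every b ≥ 0. -/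
open Matrix Finset

/-!
For `u ≠ 0` the functional `u ⬝ᵥ ·` on `(ZMod 2)^k` is onto, so its kernel has `2^(k-1)`
elements, `2^(k-1) - 1` of them nonzero. Summing the constraint over all `2^k - 1` nonzero `u`
counts every `a_v` exactly `2^(k-1) - 1` times, so `(2^(k-1) - 1) ∑ a_v ≤ (2^k - 1) b`; for
`b = (2^(k-1) - 1) Q` the constant tuple `a ≡ Q` attains this bound.
-/

section DotProduct

variable {ι F : Type*} [Fintype ι] [DecidableEq ι] [Field F] [Fintype F] [DecidableEq F]

omit [Fintype F] [DecidableEq F] in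
lemma dotProduct_left_surjective {u : ι → F} (hu : u ≠ 0) :
    Function.Surjective (u ⬝ᵥ ·) := by
  obtain ⟨i, hi⟩ := Function.ne_iff.mp hu
  intro c
  exact ⟨Pi.single i (c / u i), by simp [dotProduct_single, mul_div_cancel₀ _ hi]⟩

lemma card_dotProduct_eq_zero_mul_card {u : ι → F} (hu : u ≠ 0) :
    #{v | u ⬝ᵥ v = 0} * Fintype.card F = Fintype.card F ^ Fintype.card ι := by
  let f : (ι → F) →+ F :=
    { toFun := (u ⬝ᵥ ·), map_zero' := dotProduct_zero u, map_add' := dotProduct_add u }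
  have hker : Nat.card f.ker = #{v | u ⬝ᵥ v = 0} := by
    rw [← Fintype.card_subtype, ← Nat.card_eq_fintype_card]; rfl
  have hrange : f.range = ⊤ := f.range_eq_top_of_surjective (dotProduct_left_surjective hu)
  have := f.ker.card_mul_index
  rwa [AddSubgroup.index_ker, hrange, hker, AddSubgroup.card_top, Nat.card_eq_fintype_card,
    Nat.card_eq_fintype_card, Fintype.card_fun] at this

lemma card_dotProduct_eq_zero {u : ι → F} (hu : u ≠ 0) :
    #{v | u ⬝ᵥ v = 0} = Fintype.card F ^ (Fintype.card ι - 1) := by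
  obtain ⟨i, -⟩ := Function.ne_iff.mp hu
  have hι : 0 < Fintype.card ι := Fintype.card_pos_iff.mpr ⟨i⟩
  refine Nat.eq_of_mul_eq_mul_right (Fintype.card_pos (α := F)) ?_
  rw [card_dotProduct_eq_zero_mul_card hu, ← pow_succ, Nat.sub_add_cancel hι]

lemma card_ne_zero_and_dotProduct_eq_zero {u : ι → F} (hu : u ≠ 0) :
    #{v | v ≠ 0 ∧ u ⬝ᵥ v = 0} = Fintype.card F ^ (Fintype.card ι - 1) - 1 := by
  rw [← card_dotProduct_eq_zero hu, ← Finset.filter_filter, Finset.filter_ne',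
    Finset.filter_erase, Finset.card_erase_of_mem (by simp)]

lemma card_ne_zero_pi : #{v : ι → F | v ≠ 0} = Fintype.card F ^ Fintype.card ι - 1 := by
  rw [Finset.filter_ne', Finset.card_erase_of_mem (Finset.mem_univ _), Finset.card_univ,
    Fintype.card_fun]

lemma sum_sum_ne_zero_and_dotProduct_eq_zero (a : (ι → F) → ℕ) :
    ∑ u ∈ {u | u ≠ 0}, ∑ v ∈ {v | v ≠ 0 ∧ u ⬝ᵥ v = 0}, a v
      = (Fintype.card F ^ (Fintype.card ι - 1) - 1) * ∑ v ∈ {v | v ≠ 0}, a v := by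
  rw [Finset.sum_comm' (t' := {v | v ≠ 0}) (s' := fun v => {u | u ≠ 0 ∧ v ⬝ᵥ u = 0}),
    Finset.mul_sum]
  · refine Finset.sum_congr rfl fun v hv => ?_
    rw [Finset.sum_const, card_ne_zero_and_dotProduct_eq_zero (Finset.mem_filter.mp hv).2,
      smul_eq_mul]
  · intro u v
    simp only [Finset.mem_filter, Finset.mem_univ, true_and, dotProduct_comm u v]
    tauto

end DotProduct

lemma mul_sum_le_of_forall_sum_le {k b : ℕ} (a : (Fin k → ZMod 2) → ℕ)
    (ha : ∀ u : Fin k → ZMod 2, u ≠ 0 → ∑ v ∈ {v | v ≠ 0 ∧ u ⬝ᵥ v = 0}, a v ≤ b) :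
    (2 ^ (k - 1) - 1) * ∑ v ∈ {v | v ≠ 0}, a v ≤ (2 ^ k - 1) * b := by
  have hcard : #{u : Fin k → ZMod 2 | u ≠ 0} = 2 ^ k - 1 := by
    simpa using card_ne_zero_pi (ι := Fin k) (F := ZMod 2)
  calc (2 ^ (k - 1) - 1) * ∑ v ∈ {v | v ≠ 0}, a v
      = ∑ u ∈ {u | u ≠ 0}, ∑ v ∈ {v | v ≠ 0 ∧ u ⬝ᵥ v = 0}, a v := by
        simpa using (sum_sum_ne_zero_and_dotProduct_eq_zero a).symm
    _ ≤ ∑ u ∈ {u : Fin k → ZMod 2 | u ≠ 0}, b :=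
        Finset.sum_le_sum fun u hu => ha u (Finset.mem_filter.mp hu).2
    _ = (2 ^ k - 1) * b := by rw [Finset.sum_const, hcard, smul_eq_mul]

lemma mkInv_pow_sub_one_mul {k : ℕ} (hk : 2 ≤ k) (Q : ℕ) :
    mkInv k ((2 ^ (k - 1) - 1) * Q) = (2 ^ k - 1) * Q := by
  have hpos : 0 < 2 ^ (k - 1) - 1 := by
    have : 2 ^ 1 ≤ 2 ^ (k - 1) := Nat.pow_le_pow_right two_pos (by omega)
    omega
  refine IsGreatest.csSup_eq ⟨⟨fun _ => Q, fun u hu => ?_, ?_⟩, ?_⟩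
  · simp [card_ne_zero_and_dotProduct_eq_zero hu]
  · simp [card_ne_zero_pi]
  · rintro m ⟨a, ha, rfl⟩
    refine Nat.le_of_mul_le_mul_left ?_ hpos
    calc (2 ^ (k - 1) - 1) * ∑ v ∈ {v | v ≠ 0}, a v
        ≤ (2 ^ k - 1) * ((2 ^ (k - 1) - 1) * Q) := mul_sum_le_of_forall_sum_le a ha
      _ = (2 ^ (k - 1) - 1) * ((2 ^ k - 1) * Q) := by ring

theorem mkInv_of_divisible (k : ℕ) (hk : 2 ≤ k) :
    (∀ Q : ℕ, mkInv k ((2 ^ (k - 1) - 1) * Q) = (2 ^ k - 1) * Q) ∧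
    (∀ b : ℕ, mkInv 2 b = 3 * b) :=
  ⟨mkInv_pow_sub_one_mul hk, fun b => by simpa using mkInv_pow_sub_one_mul le_rfl b⟩
end

section
/- For k ≥ 2 and any non-negative integer b, m_k(b) ≤ ⌊(2^k − 1)b/(2^{k−1} − 1)⌋ = 2b + ⌊b/(2^{k−1} − 1)⌋. -/
open Matrix Finset

/-!
Double counting: summing the constraint at every nonzero `u` counts each `a v` once for every
nonzero `u` orthogonal to `v`. For `v ≠ 0` the orthogonal vectors form a hyperplane, so each
`a v` is counted `2 ^ (k - 1) - 1` times and `(2 ^ (k - 1) - 1) * ∑ a v ≤ (2 ^ k - 1) * b`.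
-/

section Orthogonal

variable {K ι : Type*} [Field K] [Fintype K] [DecidableEq K] [Fintype ι] [DecidableEq ι]

theorem card_filter_dotProduct_eq_zero {v : ι → K} (hv : v ≠ 0) :
    #{u : ι → K | u ⬝ᵥ v = 0} = Fintype.card K ^ (Fintype.card ι - 1) := by
  set f := dotProductEquiv K ι v
  have hrank : Module.finrank K (LinearMap.ker f) = Fintype.card ι - 1 := by
    have := f.finrank_ker_add_one_of_ne_zero ((LinearEquiv.map_ne_zero_iff _).2 hv)
    rw [Module.finrank_fintype_fun_eq_card] at this
    omega
  calc #{u : ι → K | u ⬝ᵥ v = 0} = Nat.card (LinearMap.ker f) := by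
        rw [← Fintype.card_subtype, ← Nat.card_eq_fintype_card]
        exact Nat.card_congr (Equiv.subtypeEquivRight fun u => by simp [f, dotProduct_comm])
    _ = Fintype.card K ^ (Fintype.card ι - 1) := by
        rw [Module.natCard_eq_pow_finrank (K := K), hrank, Nat.card_eq_fintype_card]

theorem card_filter_ne_zero_and_dotProduct_eq_zero {v : ι → K} (hv : v ≠ 0) :
    #{u : ι → K | u ≠ 0 ∧ u ⬝ᵥ v = 0} = Fintype.card K ^ (Fintype.card ι - 1) - 1 := by
  have : ({u : ι → K | u ≠ 0 ∧ u ⬝ᵥ v = 0} : Finset _)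
      = ({u | u ⬝ᵥ v = 0} : Finset _).erase 0 := by
    ext u
    simp [and_comm]
  rw [this, card_erase_of_mem (by simp), card_filter_dotProduct_eq_zero hv]

theorem card_filter_ne_zero_s15 : #{u : ι → K | u ≠ 0} = Fintype.card K ^ Fintype.card ι - 1 := by
  rw [filter_ne', card_erase_of_mem (mem_univ 0), card_univ, Fintype.card_fun]

theorem sum_sum_filter_dotProduct_eq_zero {M : Type*} [AddCommMonoid M] (a : (ι → K) → M) :
    ∑ u ∈ {u : ι → K | u ≠ 0}, ∑ v ∈ {v | v ≠ 0 ∧ u ⬝ᵥ v = 0}, a v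
      = (Fintype.card K ^ (Fintype.card ι - 1) - 1) • ∑ v ∈ {v : ι → K | v ≠ 0}, a v := by
  rw [sum_comm' (t' := {v | v ≠ 0}) (s' := fun v => {u | u ≠ 0 ∧ u ⬝ᵥ v = 0}),
    smul_sum]
  · refine sum_congr rfl fun v hv => ?_
    rw [sum_const, card_filter_ne_zero_and_dotProduct_eq_zero (mem_filter.1 hv).2]
  · intro u v
    simp only [mem_filter, mem_univ, true_and]
    tauto

theorem mul_sum_le_of_forall_sum_filter_dotProduct_le {a : (ι → K) → ℕ} {b : ℕ}
    (h : ∀ u : ι → K, u ≠ 0 → ∑ v ∈ {v | v ≠ 0 ∧ u ⬝ᵥ v = 0}, a v ≤ b) :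
    (Fintype.card K ^ (Fintype.card ι - 1) - 1) * ∑ v ∈ {v : ι → K | v ≠ 0}, a v
      ≤ (Fintype.card K ^ Fintype.card ι - 1) * b := by
  rw [← smul_eq_mul, ← sum_sum_filter_dotProduct_eq_zero, ← card_filter_ne_zero_s15, ← smul_eq_mul,
    ← sum_const]
  exact sum_le_sum fun u hu => h u (mem_filter.1 hu).2

end Orthogonal

theorem Nat.two_mul_add_one_mul_div {d : ℕ} (hd : 0 < d) (b : ℕ) :
    (2 * d + 1) * b / d = 2 * b + b / d := by
  rw [show (2 * d + 1) * b = b + d * (2 * b) by ring, Nat.add_mul_div_left _ _ hd, add_comm]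

theorem mkInv_upper_bound (k b : ℕ) (hk : 2 ≤ k) :
    mkInv k b ≤ (2 ^ k - 1) * b / (2 ^ (k - 1) - 1) ∧
    (2 ^ k - 1) * b / (2 ^ (k - 1) - 1) = 2 * b + b / (2 ^ (k - 1) - 1) := by
  have hd : 0 < 2 ^ (k - 1) - 1 := by
    have : 2 ^ 1 ≤ 2 ^ (k - 1) := Nat.pow_le_pow_right two_pos (by omega)
    omega
  have hq : 2 ^ k - 1 = 2 * (2 ^ (k - 1) - 1) + 1 := by
    rw [← Nat.two_pow_pred_mul_two (by omega : 0 < k)]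
    omega
  refine ⟨csSup_le' ?_, by rw [hq, Nat.two_mul_add_one_mul_div hd]⟩
  rintro m ⟨a, ha, rfl⟩
  rw [Nat.le_div_iff_mul_le hd, mul_comm]
  simpa using mul_sum_le_of_forall_sum_filter_dotProduct_le ha
end

section
/- For k ≥ 3 and every non-negative integer b, m_k(b) ≤ m_{k−1}(b). -/
open Matrix Finset

/-!
Push a weight function on `(ZMod 2)^(n+1)` forward along the projection to the last `n`
coordinates. Orthogonality to `(0, u')` only sees those coordinates, so each constraint of the
image is dominated by a constraint of the original weights. The only nonzero vector killed by the
projection, `(1, 0, …, 0)`, is orthogonal to every `(0, u')`, so its weight can be moved onto any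
fixed nonzero vector without breaking a constraint, and the total weight is preserved.

Comparing the suprema needs the totals in dimension `n` to be bounded (an unbounded `sSup` in `ℕ`
is `0`). For `n ≥ 2` every nonzero vector has a nonzero orthogonal vector, so each single weight
is at most `b`.
-/

section Admissible

variable {ι κ : Type*} [Fintype ι] [DecidableEq ι] [Fintype κ] [DecidableEq κ]

def IsAdmissible (b : ℕ) (a : (ι → ZMod 2) → ℕ) : Prop :=
  ∀ u : ι → ZMod 2, u ≠ 0 → ∑ v ∈ univ.filter (fun v => v ≠ 0 ∧ u ⬝ᵥ v = 0), a v ≤ b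

variable (ι) in
def admissibleTotals (b : ℕ) : Set ℕ :=
  {m | ∃ a : (ι → ZMod 2) → ℕ, IsAdmissible b a ∧ ∑ v ∈ univ.filter (fun v => v ≠ 0), a v = m}

theorem mkInv_eq_sSup_admissibleTotals (k b : ℕ) :
    mkInv k b = sSup (admissibleTotals (Fin k) b) :=
  rfl

theorem IsAdmissible.le_of_ne_zero [Nontrivial ι] {b : ℕ} {a : (ι → ZMod 2) → ℕ} (ha : IsAdmissible b a)
    {v : ι → ZMod 2} (hv : v ≠ 0) : a v ≤ b := by
  obtain ⟨u, hu, huv⟩ := exists_ne_zero_dotProduct_eq_zero v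
  exact (single_le_sum (fun _ _ => Nat.zero_le _) (by simp [hv, huv])).trans (ha u hu)

theorem bddAbove_admissibleTotals [Nontrivial ι] (b : ℕ) : BddAbove (admissibleTotals ι b) := by
  refine ⟨Fintype.card (ι → ZMod 2) * b, ?_⟩
  rintro _ ⟨a, ha, rfl⟩
  calc ∑ v ∈ univ.filter (fun v => v ≠ 0), a v
      ≤ ∑ _v ∈ univ.filter (fun v : ι → ZMod 2 => v ≠ 0), b :=
        sum_le_sum fun v hv => ha.le_of_ne_zero (mem_filter.mp hv).2
    _ ≤ Fintype.card (ι → ZMod 2) * b := by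
        rw [sum_const, smul_eq_mul]
        exact Nat.mul_le_mul_right b (card_le_univ _)

theorem admissibleTotals_subset_of_map {b : ℕ} (π : (ι → ZMod 2) → (κ → ZMod 2))
    (hπ : ∀ v, v ≠ 0 → π v ≠ 0)
    (hlift : ∀ u', u' ≠ 0 → ∃ u, u ≠ 0 ∧ ∀ v, v ≠ 0 → u' ⬝ᵥ π v = 0 → u ⬝ᵥ v = 0) :
    admissibleTotals ι b ⊆ admissibleTotals κ b := by
  rintro _ ⟨a, ha, rfl⟩
  refine ⟨fun v' => ∑ v ∈ univ.filter (fun v => v ≠ 0) with π v = v', a v, ?_, ?_⟩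
  · intro u' hu'
    obtain ⟨u, hu, huv⟩ := hlift u' hu'
    rw [sum_fiberwise_eq_sum_filter]
    refine (sum_le_sum_of_subset fun v hv => ?_).trans (ha u hu)
    simp only [mem_filter, mem_univ, true_and] at hv ⊢
    exact ⟨hv.1, huv v hv.1 hv.2.2⟩
  · exact sum_fiberwise_of_maps_to (by simpa using hπ) _

end Admissible

section Projection

variable {n : ℕ}

theorem eq_zero_or_eq_cons_one_zero_of_vecTail_eq_zero {v : Fin (n + 1) → ZMod 2}
    (h : vecTail v = 0) : v = 0 ∨ v = vecCons 1 0 := by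
  rw [← cons_head_tail v, h]
  generalize vecHead v = x
  fin_cases x
  exacts [Or.inl (cons_eq_zero_iff.mpr ⟨rfl, rfl⟩), Or.inr rfl]

def projTail (w : Fin n → ZMod 2) (v : Fin (n + 1) → ZMod 2) : Fin n → ZMod 2 :=
  if v = vecCons 1 0 then w else vecTail v

theorem projTail_ne_zero {w : Fin n → ZMod 2} (hw : w ≠ 0) {v : Fin (n + 1) → ZMod 2}
    (hv : v ≠ 0) : projTail w v ≠ 0 := by
  unfold projTail
  split_ifs with h
  · exact hw
  · exact fun ht => (eq_zero_or_eq_cons_one_zero_of_vecTail_eq_zero ht).elim hv h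

theorem cons_zero_dotProduct_eq_zero {w u' : Fin n → ZMod 2} {v : Fin (n + 1) → ZMod 2}
    (h : u' ⬝ᵥ projTail w v = 0) : vecCons 0 u' ⬝ᵥ v = 0 := by
  unfold projTail at h
  split_ifs at h with hv
  · simp [hv]
  · simpa using h

theorem admissibleTotals_succ_subset [NeZero n] (b : ℕ) :
    admissibleTotals (Fin (n + 1)) b ⊆ admissibleTotals (Fin n) b := by
  obtain ⟨w, hw⟩ := exists_ne (0 : Fin n → ZMod 2)
  exact admissibleTotals_subset_of_map (projTail w) (fun _ => projTail_ne_zero hw)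
    fun u' hu' => ⟨vecCons 0 u', by simpa using hu', fun _ _ => cons_zero_dotProduct_eq_zero⟩

end Projection

theorem mkInv_antitone_k (k b : ℕ) (hk : 3 ≤ k) : mkInv k b ≤ mkInv (k - 1) b := by
  obtain ⟨n, rfl⟩ : ∃ n, k = n + 1 := ⟨k - 1, by omega⟩
  have : Nontrivial (Fin n) := Fin.nontrivial_iff_two_le.mpr (by omega)
  have : NeZero n := ⟨by omega⟩
  rw [Nat.add_sub_cancel, mkInv_eq_sSup_admissibleTotals, mkInv_eq_sSup_admissibleTotals]
  exact csSup_le_csSup' (bddAbove_admissibleTotals b) (admissibleTotals_succ_subset b)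
end

section
/- For k ≥ 2: m_k(b) = b when 0 ≤ b ≤ k − 2, and m_k(k−1) = k+1. -/
/-!
If the support `S` of a weighting spans a proper subspace, one hyperplane sees all of it, so the
total weight is at most `b`. Otherwise every hyperplane meets `S` in at most `b` points while any
`k - 1` vectors lie in a hyperplane: for `b ≤ k - 2` this is impossible, and for `b = k - 1` all
weights are `1` and any `k` points of `S` span. Over `𝔽₂` a vector outside every coordinate
hyperplane of a basis is the sum of the basis, so then `S` is a basis plus at most one vector.
The bounds are attained by `b` times one vector and by `e₁, …, e_k, e₁ + ⋯ + e_k`.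
-/

open Matrix Finset

section LinearAlgebra

theorem Submodule.exists_ne_zero_dotProduct_eq_zero {K n : Type*} [Field K] [Fintype n]
    [DecidableEq n] {W : Submodule K (n → K)} (hW : W ≠ ⊤) :
    ∃ u ≠ 0, ∀ w ∈ W, u ⬝ᵥ w = 0 := by
  obtain ⟨f, hf, hWf⟩ := W.exists_le_ker_of_lt_top hW.lt_top
  refine ⟨(dotProductEquiv K n).symm f, by simpa using hf, fun w hw => ?_⟩
  rw [← dotProductEquiv_apply_apply, LinearEquiv.apply_symm_apply]
  exact hWf hw

theorem Submodule.span_finset_ne_top_of_card_lt {K V : Type*} [DivisionRing K] [AddCommGroup V]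
    [Module K V] [FiniteDimensional K V] {T : Finset V} (hT : #T < Module.finrank K V) :
    span K (T : Set V) ≠ ⊤ := by
  intro h
  have := finrank_span_finset_le_card (R := K) T
  rw [Set.finrank, h, finrank_top] at this
  omega

theorem Finset.card_le_finrank_add_one_of_forall_span_eq_top {V : Type*} [AddCommGroup V]
    [Module (ZMod 2) V] [FiniteDimensional (ZMod 2) V] {S : Finset V}
    (hS : ∀ T ⊆ S, #T = Module.finrank (ZMod 2) V →
      Submodule.span (ZMod 2) (T : Set V) = ⊤) :
    #S ≤ Module.finrank (ZMod 2) V + 1 := by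
  classical
  set n := Module.finrank (ZMod 2) V
  rcases le_or_gt #S n with h | h
  · omega
  obtain ⟨t, htS, htn⟩ := exists_subset_card_eq h.le
  have hspan := hS t htS htn
  suffices S ⊆ insert (∑ x ∈ t, x) t from
    calc #S ≤ #(insert (∑ x ∈ t, x) t) := card_le_card this
      _ ≤ n + 1 := htn ▸ card_insert_le _ _
  intro w hw
  by_cases hwt : w ∈ t
  · exact mem_insert_of_mem hwt
  obtain ⟨f, -, hfw⟩ := Submodule.mem_span_finset.mp (hspan ▸ Submodule.mem_top (x := w))
  -- A vanishing coordinate would put `w` and `n - 1` vectors of `t` into a proper subspace.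
  have hf : ∀ x ∈ t, f x = 1 := by
    intro x hx
    by_contra hfx1
    have hfx : f x = 0 := (by decide : ∀ c : ZMod 2, c ≠ 1 → c = 0) _ hfx1
    have hn : 0 < n := htn ▸ card_pos.mpr ⟨x, hx⟩
    have hw' : w ∈ Submodule.span (ZMod 2) ((t.erase x : Finset V) : Set V) := by
      rw [← hfw, ← sum_erase t (f := fun y => f y • y) (a := x) (by simp [hfx])]
      exact Submodule.sum_mem _ fun y hy => Submodule.smul_mem _ _ (Submodule.subset_span hy)
    have hcard : #(insert w (t.erase x)) = n := by
      rw [card_insert_of_notMem fun h => hwt (mem_of_mem_erase h), card_erase_of_mem hx]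
      omega
    have := hS _ (insert_subset hw ((erase_subset _ _).trans htS)) hcard
    rw [coe_insert, Submodule.span_insert_eq_span hw'] at this
    exact Submodule.span_finset_ne_top_of_card_lt (by rw [card_erase_of_mem hx]; omega) this
  have hws : w = ∑ x ∈ t, x :=
    hfw.symm.trans (sum_congr rfl fun x hx => by rw [hf x hx, one_smul])
  exact hws ▸ mem_insert_self _ _

end LinearAlgebra

section Weightings

variable {k b : ℕ}

def HyperplaneBounded (b : ℕ) (a : (Fin k → ZMod 2) → ℕ) : Prop :=
  ∀ u : Fin k → ZMod 2, u ≠ 0 → ∑ v ∈ univ.filter (fun v => v ≠ 0 ∧ u ⬝ᵥ v = 0), a v ≤ b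

def totalWeight (a : (Fin k → ZMod 2) → ℕ) : ℕ :=
  ∑ v ∈ univ.filter (fun v => v ≠ 0), a v

def weightSupport (a : (Fin k → ZMod 2) → ℕ) : Finset (Fin k → ZMod 2) :=
  univ.filter (fun v => v ≠ 0 ∧ a v ≠ 0)

theorem mkInv_eq {m : ℕ}
    (hex : ∃ a : (Fin k → ZMod 2) → ℕ, HyperplaneBounded b a ∧ totalWeight a = m)
    (hle : ∀ a : (Fin k → ZMod 2) → ℕ, HyperplaneBounded b a → totalWeight a ≤ m) :
    mkInv k b = m :=
  IsGreatest.csSup_eq ⟨hex, by rintro _ ⟨a, ha, rfl⟩; exact hle a ha⟩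

theorem mem_weightSupport {a : (Fin k → ZMod 2) → ℕ} {v : Fin k → ZMod 2} :
    v ∈ weightSupport a ↔ v ≠ 0 ∧ a v ≠ 0 := by
  simp [weightSupport]

theorem totalWeight_eq_sum_weightSupport (a : (Fin k → ZMod 2) → ℕ) :
    totalWeight a = ∑ v ∈ weightSupport a, a v := by
  rw [totalWeight, weightSupport, ← sum_filter_ne_zero, filter_filter]

theorem one_le_of_mem_weightSupport {a : (Fin k → ZMod 2) → ℕ} {v : Fin k → ZMod 2}
    (hv : v ∈ weightSupport a) : 1 ≤ a v :=
  Nat.one_le_iff_ne_zero.mpr (mem_weightSupport.mp hv).2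

theorem card_le_sum_of_subset_weightSupport {a : (Fin k → ZMod 2) → ℕ}
    {T : Finset (Fin k → ZMod 2)} (hT : T ⊆ weightSupport a) : #T ≤ ∑ v ∈ T, a v := by
  rw [card_eq_sum_ones]
  exact sum_le_sum fun _ hv => one_le_of_mem_weightSupport (hT hv)

namespace HyperplaneBounded

variable {a : (Fin k → ZMod 2) → ℕ}

theorem sum_le_of_span_ne_top (ha : HyperplaneBounded b a) {T : Finset (Fin k → ZMod 2)}
    (hT0 : ∀ v ∈ T, v ≠ 0) (hT : Submodule.span (ZMod 2) (T : Set (Fin k → ZMod 2)) ≠ ⊤) :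
    ∑ v ∈ T, a v ≤ b := by
  obtain ⟨u, hu, huT⟩ := Submodule.exists_ne_zero_dotProduct_eq_zero hT
  refine (sum_le_sum_of_subset fun v hv => ?_).trans (ha u hu)
  exact mem_filter.mpr ⟨mem_univ v, hT0 v hv, huT v (Submodule.subset_span hv)⟩

theorem card_le_of_span_ne_top (ha : HyperplaneBounded b a) {T : Finset (Fin k → ZMod 2)}
    (hT : T ⊆ weightSupport a)
    (hspan : Submodule.span (ZMod 2) (T : Set (Fin k → ZMod 2)) ≠ ⊤) : #T ≤ b :=
  (card_le_sum_of_subset_weightSupport hT).trans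
    (ha.sum_le_of_span_ne_top (fun _ hv => (mem_weightSupport.mp (hT hv)).1) hspan)

theorem totalWeight_le (ha : HyperplaneBounded b a) (hbk : b + 1 < k) : totalWeight a ≤ b := by
  have hcard : #(weightSupport a) ≤ b := by
    by_contra! h
    obtain ⟨T, hT, hTcard⟩ := exists_subset_card_eq h
    have := ha.card_le_of_span_ne_top hT
      (Submodule.span_finset_ne_top_of_card_lt (by rw [Module.finrank_fin_fun]; omega))
    omega
  rw [totalWeight_eq_sum_weightSupport]
  exact ha.sum_le_of_span_ne_top (fun _ hv => (mem_weightSupport.mp hv).1)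
    (Submodule.span_finset_ne_top_of_card_lt (by rw [Module.finrank_fin_fun]; omega))

theorem eq_one_of_mem_weightSupport (ha : HyperplaneBounded b a) (hb : 1 ≤ b) (hbk : b < k)
    (hS : b ≤ #(weightSupport a)) {v : Fin k → ZMod 2} (hv : v ∈ weightSupport a) :
    a v = 1 := by
  obtain ⟨T, hvT, hT, hTcard⟩ :=
    exists_subsuperset_card_eq (singleton_subset_iff.mpr hv) (by simpa using hb) hS
  have hone : ∀ w ∈ T, 1 ≤ a w := fun _ hw => one_le_of_mem_weightSupport (hT hw)
  have hsum : ∑ w ∈ T, a w ≤ ∑ _w ∈ T, 1 := by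
    rw [← card_eq_sum_ones, hTcard]
    exact ha.sum_le_of_span_ne_top (fun _ hw => (mem_weightSupport.mp (hT hw)).1)
      (Submodule.span_finset_ne_top_of_card_lt (by rw [Module.finrank_fin_fun]; omega))
  exact ((sum_eq_sum_iff_of_le hone).mp (le_antisymm (sum_le_sum hone) hsum) v
    (singleton_subset_iff.mp hvT)).symm

theorem totalWeight_le_add_one (ha : HyperplaneBounded (k - 1) a) (hk : 2 ≤ k) :
    totalWeight a ≤ k + 1 := by
  rw [totalWeight_eq_sum_weightSupport]
  rcases lt_or_ge #(weightSupport a) k with h | h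
  · have := ha.sum_le_of_span_ne_top (fun _ hv => (mem_weightSupport.mp hv).1)
      (Submodule.span_finset_ne_top_of_card_lt (by rw [Module.finrank_fin_fun]; omega))
    omega
  rw [sum_congr rfl fun v hv =>
    ha.eq_one_of_mem_weightSupport (by omega) (by omega) (by omega) hv, ← card_eq_sum_ones]
  have := Finset.card_le_finrank_add_one_of_forall_span_eq_top fun T hT hTcard => by
    by_contra hspan
    have := ha.card_le_of_span_ne_top hT hspan
    rw [Module.finrank_fin_fun] at hTcard
    omega
  rwa [Module.finrank_fin_fun] at this

end HyperplaneBounded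

theorem hyperplaneBounded_of_totalWeight_le {a : (Fin k → ZMod 2) → ℕ}
    (h : totalWeight a ≤ b) : HyperplaneBounded b a := fun _ _ =>
  (sum_le_sum_of_subset fun v hv => mem_filter.mpr ⟨mem_univ v, (mem_filter.mp hv).2.1⟩).trans h

theorem totalWeight_single {v : Fin k → ZMod 2} (hv : v ≠ 0) (b : ℕ) :
    totalWeight (Pi.single v b) = b := by
  simp [totalWeight, sum_pi_single', hv]

theorem Pi.single_one_left_injective {ι R : Type*} [DecidableEq ι] [Zero R] [One R]
    [NeZero (1 : R)] : Function.Injective fun i : ι => (Pi.single i 1 : ι → R) := by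
  intro i j h
  by_contra hij
  simpa [Pi.single_apply, Ne.symm hij] using congrFun h j

/-- `k + 1` vectors any `k` of which form a basis. -/
def standardFrame (k : ℕ) : Finset (Fin k → ZMod 2) :=
  insert 1 (univ.image fun i => Pi.single i 1)

theorem single_mem_standardFrame (i : Fin k) : Pi.single i 1 ∈ standardFrame k :=
  mem_insert_of_mem (mem_image_of_mem _ (mem_univ i))

theorem single_ne_one (hk : 2 ≤ k) (i : Fin k) : (Pi.single i 1 : Fin k → ZMod 2) ≠ 1 := by
  have : Nontrivial (Fin k) := Fin.nontrivial_iff_two_le.mpr hk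
  obtain ⟨j, hj⟩ := exists_ne i
  intro h
  simpa [hj] using congrFun h j

theorem card_standardFrame (hk : 2 ≤ k) : #(standardFrame k) = k + 1 := by
  rw [standardFrame, card_insert_of_notMem, card_image_of_injective _ Pi.single_one_left_injective,
    card_univ, Fintype.card_fin]
  simpa only [mem_image, mem_univ, true_and, not_exists] using single_ne_one hk

theorem ne_zero_of_mem_standardFrame (hk : 1 ≤ k) {v : Fin k → ZMod 2}
    (hv : v ∈ standardFrame k) : v ≠ 0 := by
  have : NeZero k := ⟨by omega⟩
  rcases mem_insert.mp hv with rfl | hv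
  · exact one_ne_zero
  · obtain ⟨i, -, rfl⟩ := mem_image.mp hv
    simp

theorem exists_pair_mem_standardFrame_dotProduct_ne_zero (hk : 2 ≤ k) {u : Fin k → ZMod 2}
    (hu : u ≠ 0) : ∃ x ∈ standardFrame k, ∃ y ∈ standardFrame k,
      x ≠ y ∧ u ⬝ᵥ x ≠ 0 ∧ u ⬝ᵥ y ≠ 0 := by
  obtain ⟨i, hi⟩ := Function.ne_iff.mp hu
  have hui : u ⬝ᵥ Pi.single i 1 ≠ 0 := by simpa [dotProduct_single] using hi
  by_cases h1 : u ⬝ᵥ 1 = 0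
  · obtain ⟨j, hji, hj⟩ : ∃ j, j ≠ i ∧ u j ≠ 0 := by
      by_contra! h
      rw [dotProduct_one, sum_eq_single i (fun j _ hji => h j hji) (by simp)] at h1
      exact hi h1
    refine ⟨_, single_mem_standardFrame i, _, single_mem_standardFrame j,
      fun h => hji (Pi.single_one_left_injective h).symm, hui, ?_⟩
    simpa [dotProduct_single] using hj
  · exact ⟨_, single_mem_standardFrame i, 1, mem_insert_self _ _, single_ne_one hk i, hui, h1⟩

theorem hyperplaneBounded_standardFrame (hk : 2 ≤ k) :
    HyperplaneBounded (k - 1) fun v => if v ∈ standardFrame k then 1 else 0 := by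
  intro u hu
  obtain ⟨x, hx, y, hy, hxy, hux, huy⟩ := exists_pair_mem_standardFrame_dotProduct_ne_zero hk hu
  rw [sum_boole, Nat.cast_id]
  calc #{v ∈ univ.filter (fun v => v ≠ 0 ∧ u ⬝ᵥ v = 0) | v ∈ standardFrame k}
      ≤ #(((standardFrame k).erase x).erase y) := by
        refine card_le_card fun v hv => ?_
        simp only [mem_filter, mem_univ, true_and] at hv
        exact mem_erase.mpr ⟨fun h => huy (h ▸ hv.1.2),
          mem_erase.mpr ⟨fun h => hux (h ▸ hv.1.2), hv.2⟩⟩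
    _ = k - 1 := by
      rw [card_erase_of_mem (mem_erase.mpr ⟨hxy.symm, hy⟩), card_erase_of_mem hx,
        card_standardFrame hk]
      omega

theorem totalWeight_standardFrame (hk : 2 ≤ k) :
    totalWeight (fun v => if v ∈ standardFrame k then 1 else 0) = k + 1 := by
  rw [totalWeight, sum_boole, Nat.cast_id, filter_filter, ← card_standardFrame hk]
  congr 1
  ext v
  simp only [mem_filter, mem_univ, true_and, and_iff_right_iff_imp]
  exact ne_zero_of_mem_standardFrame (by omega)

end Weightings

theorem mkInv_small_b (k : ℕ) (hk : 2 ≤ k) :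
    (∀ b : ℕ, b ≤ k - 2 → mkInv k b = b) ∧ mkInv k (k - 1) = k + 1 := by
  have hone : (1 : Fin k → ZMod 2) ≠ 0 :=
    ne_zero_of_mem_standardFrame (by omega) (mem_insert_self _ _)
  refine ⟨fun b hb => mkInv_eq ⟨Pi.single 1 b, ?_, totalWeight_single hone b⟩ ?_, ?_⟩
  · exact hyperplaneBounded_of_totalWeight_le (totalWeight_single hone b).le
  · exact fun a ha => ha.totalWeight_le (by omega)
  · exact mkInv_eq ⟨_, hyperplaneBounded_standardFrame hk, totalWeight_standardFrame hk⟩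
      fun a ha => ha.totalWeight_le_add_one hk
end
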